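/- arXiv:2102.05855 — 2 statements merged into one kernel-verified Lean document; each statement's English description precedes it below -/
import Mathlib

section
/- Let a₁ > 0 and t₀ < t₁. Let u : [t₀, t₁) × ℝ → ℝ be continuous, differentiable on (t₀, t₁) × ℝ, and suppose it satisfies the partial differential inequality ∂u/∂t + a₁·u + a₁·∂u/∂y ≤ 0 on (t₀, t₁) × ℝ. Then for every t ∈ [t₀, t₁) and every y ∈ ℝ: u(t, y) ≤ u(t₀, y − a₁(t − t₀))·e^{−a₁(t − t₀)}. -/
/-!
Along the characteristic `γ r = y - a₁ (t - r)` the chain rule turns the inequality into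
`v' + a₁ v ≤ 0` for `v r = u r (γ r)`, so `r ↦ exp (a₁ r) v r` is antitone on `[t₀, t]`.
Comparing its values at `t₀` and at `t`, where `γ t = y`, gives the bound.
-/

open Set Real

theorem DifferentiableAt.hasDerivAt_comp_graph {F : Type*} [NormedAddCommGroup F] [NormedSpace ℝ F]
    {f : ℝ → ℝ → F} {γ : ℝ → ℝ} {s c : ℝ}
    (hf : DifferentiableAt ℝ (fun q : ℝ × ℝ => f q.1 q.2) (s, γ s)) (hγ : HasDerivAt γ c s) :
    HasDerivAt (fun r => f r (γ r))
      (deriv (fun r => f r (γ s)) s + c • deriv (f s) (γ s)) s := by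
  obtain ⟨L, hF⟩ := hf
  have hpt := hF.comp_hasDerivAt s ((hasDerivAt_id s).prodMk (hasDerivAt_const s (γ s)))
  have hpy := hF.comp_hasDerivAt (γ s) ((hasDerivAt_const (γ s) s).prodMk (hasDerivAt_id (γ s)))
  have hcurve := hF.comp_hasDerivAt s ((hasDerivAt_id s).prodMk hγ)
  have hsplit : ((1 : ℝ), c) = (1, 0) + c • ((0 : ℝ), (1 : ℝ)) := by simp
  rw [hsplit, map_add, map_smul] at hcurve
  rwa [← hpt.deriv, ← hpy.deriv] at hcurve

theorem antitoneOn_exp_mul_of_deriv_add_mul_nonpos {v v' : ℝ → ℝ} {k a b : ℝ}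
    (hcont : ContinuousOn v (Icc a b)) (hderiv : ∀ s ∈ Ioo a b, HasDerivAt v (v' s) s)
    (hbound : ∀ s ∈ Ioo a b, v' s + k * v s ≤ 0) :
    AntitoneOn (fun s => exp (k * s) * v s) (Icc a b) := by
  have hw : ∀ s ∈ Ioo a b,
      HasDerivAt (fun s => exp (k * s) * v s) (exp (k * s) * (v' s + k * v s)) s := by
    intro s hs
    have hexp : HasDerivAt (fun s => exp (k * s)) (exp (k * s) * k) s := by
      simpa using ((hasDerivAt_id s).const_mul k).exp
    exact (hexp.mul (hderiv s hs)).congr_deriv (by ring)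
  refine antitoneOn_of_deriv_nonpos (convex_Icc a b)
    ((continuous_const.mul continuous_id).rexp.continuousOn.mul hcont) ?_ ?_
  · rw [interior_Icc]
    exact fun s hs => (hw s hs).differentiableAt.differentiableWithinAt
  · rw [interior_Icc]
    intro s hs
    rw [(hw s hs).deriv]
    exact mul_nonpos_of_nonneg_of_nonpos (exp_pos _).le (hbound s hs)

theorem le_mul_exp_of_deriv_add_mul_nonpos {v v' : ℝ → ℝ} {k a b : ℝ} (hab : a ≤ b)
    (hcont : ContinuousOn v (Icc a b)) (hderiv : ∀ s ∈ Ioo a b, HasDerivAt v (v' s) s)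
    (hbound : ∀ s ∈ Ioo a b, v' s + k * v s ≤ 0) :
    v b ≤ v a * exp (-k * (b - a)) := by
  have h := antitoneOn_exp_mul_of_deriv_add_mul_nonpos hcont hderiv hbound
    (left_mem_Icc.mpr hab) (right_mem_Icc.mpr hab) hab
  have hexp : exp (-k * (b - a)) = exp (k * a) / exp (k * b) := by
    rw [← exp_sub]; congr 1; ring
  rw [hexp, mul_div_assoc', le_div_iff₀ (exp_pos _)]
  linarith

theorem transport_pdi_comparison_general
    (a₁ t₀ t₁ : ℝ)
    (u : ℝ → ℝ → ℝ)
    (hcont : ContinuousOn (fun q : ℝ × ℝ => u q.1 q.2) (Set.Ico t₀ t₁ ×ˢ Set.univ))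
    (hdiff : ∀ t ∈ Set.Ioo t₀ t₁, ∀ y : ℝ,
      DifferentiableAt ℝ (fun q : ℝ × ℝ => u q.1 q.2) (t, y))
    (hPDI : ∀ t ∈ Set.Ioo t₀ t₁, ∀ y : ℝ,
      deriv (fun s => u s y) t + a₁ * u t y + a₁ * deriv (fun z => u t z) y ≤ 0) :
    ∀ t ∈ Set.Ico t₀ t₁, ∀ y : ℝ,
      u t y ≤ u t₀ (y - a₁ * (t - t₀)) * Real.exp (-a₁ * (t - t₀)) := by
  intro t ht y
  set γ : ℝ → ℝ := fun s => y - a₁ * (t - s)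
  have hγ : ∀ s, HasDerivAt γ a₁ s := fun s => by
    simpa using ((hasDerivAt_id s).const_sub t).const_mul a₁ |>.const_sub y
  have hIoo : ∀ s ∈ Ioo t₀ t, s ∈ Ioo t₀ t₁ := fun s hs => ⟨hs.1, hs.2.trans ht.2⟩
  have hchar := le_mul_exp_of_deriv_add_mul_nonpos (v := fun s => u s (γ s)) (k := a₁) ht.1
    (hcont.comp (by fun_prop : Continuous fun s => (s, γ s)).continuousOn
      fun s hs => ⟨⟨hs.1, hs.2.trans_lt ht.2⟩, mem_univ _⟩)
    (fun s hs => (hdiff s (hIoo s hs) (γ s)).hasDerivAt_comp_graph (hγ s))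
    (fun s hs => by simp only [smul_eq_mul]; linarith [hPDI s (hIoo s hs) (γ s)])
  simpa [γ] using hchar

/-- comparison principle for a linear transport-type PDI.
If `u` is continuous on `[t₀,t₁) × ℝ`, differentiable on `(t₀,t₁) × ℝ`, and satisfies
`∂u/∂t + a₁·u + a₁·∂u/∂y ≤ 0` there, then
`u(t,y) ≤ u(t₀, y − a₁(t−t₀))·e^{−a₁(t−t₀)}` for all `t ∈ [t₀,t₁)` and `y ∈ ℝ`. -/
theorem transport_pdi_comparison
    (a₁ t₀ t₁ : ℝ) (ha₁ : 0 < a₁) (ht : t₀ < t₁)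
    (u : ℝ → ℝ → ℝ)
    (hcont : ContinuousOn (fun q : ℝ × ℝ => u q.1 q.2) (Set.Ico t₀ t₁ ×ˢ Set.univ))
    (hdiff : ∀ t ∈ Set.Ioo t₀ t₁, ∀ y : ℝ,
      DifferentiableAt ℝ (fun q : ℝ × ℝ => u q.1 q.2) (t, y))
    (hPDI : ∀ t ∈ Set.Ioo t₀ t₁, ∀ y : ℝ,
      deriv (fun s => u s y) t + a₁ * u t y + a₁ * deriv (fun z => u t z) y ≤ 0) :
    ∀ t ∈ Set.Ico t₀ t₁, ∀ y : ℝ,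
      u t y ≤ u t₀ (y - a₁ * (t - t₀)) * Real.exp (-a₁ * (t - t₀)) :=
  transport_pdi_comparison_general a₁ t₀ t₁ u hcont hdiff hPDI
end

section
/- For every η with 0 < η < 1 and every integer K ≥ 1: (2 − η)·(1 − (1−η)^K)/(1 + (1−η)^K) ≥ 1 − e^{−ηK}. -/
/-- for every `0 < η < 1` and every integer `K ≥ 1`,
`(2 − η)(1 − (1−η)^K)/(1 + (1−η)^K) ≥ 1 − e^{−ηK}`. -/
theorem discrete_vs_continuous_saturation
    (η : ℝ) (K : ℕ) (hη : 0 < η) (hη1 : η < 1) (hK : 1 ≤ K) :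
    (2 - η) * (1 - (1 - η) ^ K) / (1 + (1 - η) ^ K) ≥ 1 - Real.exp (-(η * K)) := by
  set q := (1 - η) ^ K with hqdef
  have hb0 : (0:ℝ) ≤ 1 - η := by linarith
  have hb1 : (1:ℝ) - η ≤ 1 := by linarith
  have hq0 : 0 ≤ q := pow_nonneg hb0 K
  have hq1 : q ≤ 1 - η := by
    calc q ≤ (1 - η) ^ 1 := pow_le_pow_of_le_one hb0 hb1 hK
    _ = 1 - η := pow_one _
  have hqe : q ≤ Real.exp (-(η * K)) := by
    have h1 : 1 - η ≤ Real.exp (-η) := by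
      have := Real.add_one_le_exp (-η); linarith
    calc q ≤ Real.exp (-η) ^ K := pow_le_pow_left₀ hb0 h1 K
    _ = Real.exp (-η * K) := by rw [← Real.exp_nat_mul]; ring_nf
    _ = Real.exp (-(η * K)) := by ring_nf
  have hpos : 0 < 1 + q := by linarith
  have step1 : 1 - Real.exp (-(η * K)) ≤ 1 - q := by linarith
  have step2 : 1 - q ≤ (2 - η) * (1 - q) / (1 + q) := by
    rw [le_div_iff₀ hpos]
    nlinarith [pow_le_one₀ hb0 hb1 (n := K)]
  linarith
end
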